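/- Under the setting of the least Frobenius norm updating model: if L_α is a polynomial of degree at most 1 (so ∇²L_α = 0) and the interpolation set X contains at least n+1 points such that the least-Frobenius-norm interpolant of L_α on X is L_α itself, then for any f and any C₁, C₂ ∈ ℝ, M^X_{L_α}(C₁f + C₂) = C₁·M^X_{L_α}(f) + C₂. That is, when the base model is linear, the least Frobenius norm updating model commutes with affine transformations of the objective. -/

import Mathlib

structure Quad (n : ℕ) where
  c : ℝ
  g : Fin n → ℝ
  A : Matrix (Fin n) (Fin n) ℝ
  symm : A.IsSymm

namespace Quad
variable {n : ℕ}

noncomputable def eval (Q : Quad n) (x : Fin n → ℝ) : ℝ :=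
  Q.c + (∑ i, Q.g i * x i) + (1 / 2) * ∑ i, ∑ j, x i * Q.A i j * x j

def add (P Q : Quad n) : Quad n :=
  ⟨P.c + Q.c, P.g + Q.g, P.A + Q.A, P.symm.add Q.symm⟩

def sub (P Q : Quad n) : Quad n :=
  ⟨P.c - Q.c, P.g - Q.g, P.A - Q.A, P.symm.sub Q.symm⟩

def smul (r : ℝ) (Q : Quad n) : Quad n :=
  ⟨r * Q.c, r • Q.g, r • Q.A, by
    simp only [Matrix.IsSymm, Matrix.transpose_smul, Q.symm.eq]⟩

def addConst (Q : Quad n) (r : ℝ) : Quad n := ⟨Q.c + r, Q.g, Q.A, Q.symm⟩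

protected def zero : Quad n := ⟨0, 0, 0, by simp [Matrix.IsSymm]⟩

end Quad

noncomputable def frobSq {n : ℕ} (M : Matrix (Fin n) (Fin n) ℝ) : ℝ := ∑ i, ∑ j, (M i j) ^ 2

def Interpolates {n m : ℕ} (Q : Quad n) (h : (Fin n → ℝ) → ℝ)
    (x : Fin m → (Fin n → ℝ)) : Prop :=
  ∀ i, Q.eval (x i) = h (x i)

def IsLFNModel {n m : ℕ} (B : Quad n) (h : (Fin n → ℝ) → ℝ)
    (x : Fin m → (Fin n → ℝ)) (Q : Quad n) : Prop :=
  Interpolates Q h x ∧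
    ∀ Q' : Quad n, Interpolates Q' h x → frobSq (Q.A - B.A) ≤ frobSq (Q'.A - B.A)

namespace Quad

variable {n : ℕ}

lemma eval_smul (Q : Quad n) (r : ℝ) (y : Fin n → ℝ) :
    (Q.smul r).eval y = r * Q.eval y := by
  simp only [eval, smul, Pi.smul_apply, Matrix.smul_apply, smul_eq_mul, mul_add,
    Finset.mul_sum]
  congr 1
  · congr 1
    exact Finset.sum_congr rfl fun i _ => by ring
  · exact Finset.sum_congr rfl fun i _ => Finset.sum_congr rfl fun j _ => by ring

lemma eval_addConst (Q : Quad n) (s : ℝ) (y : Fin n → ℝ) :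
    (Q.addConst s).eval y = Q.eval y + s := by
  simp only [eval, addConst]
  ring

end Quad

lemma frobSq_nonneg {n : ℕ} (A : Matrix (Fin n) (Fin n) ℝ) : 0 ≤ frobSq A := by
  unfold frobSq
  positivity

lemma frobSq_smul {n : ℕ} (r : ℝ) (A : Matrix (Fin n) (Fin n) ℝ) :
    frobSq (r • A) = r ^ 2 * frobSq A := by
  simp [frobSq, Finset.mul_sum, mul_pow]

section Affine

variable {n m : ℕ} {x : Fin m → (Fin n → ℝ)} {h : (Fin n → ℝ) → ℝ} {Q : Quad n}

lemma Interpolates.smul_addConst (hQ : Interpolates Q h x) (r s : ℝ) :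
    Interpolates ((Q.smul r).addConst s) (fun y => r * h y + s) x := fun i => by
  rw [Quad.eval_addConst, Quad.eval_smul, hQ i]

lemma Interpolates.of_smul_addConst {r s : ℝ} (hr : r ≠ 0)
    (hQ : Interpolates Q (fun y => r * h y + s) x) :
    Interpolates ((Q.addConst (-s)).smul r⁻¹) h x := fun i => by
  rw [Quad.eval_smul, Quad.eval_addConst, hQ i]
  field_simp
  ring

/-- With a zero-Hessian base model the objective `‖∇²Q‖_F²` is homogeneous of degree two,
which is what fails for a general base model. -/
lemma IsLFNModel.smul_addConst {B : Quad n} (hB : B.A = 0) (hQ : IsLFNModel B h x Q)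
    (r s : ℝ) : IsLFNModel B (fun y => r * h y + s) x ((Q.smul r).addConst s) := by
  refine ⟨hQ.1.smul_addConst r s, fun Q' hQ' => ?_⟩
  simp only [Quad.addConst, Quad.smul, hB, sub_zero, frobSq_smul]
  rcases eq_or_ne r 0 with rfl | hr
  · simpa using frobSq_nonneg Q'.A
  have hmin := hQ.2 _ (hQ'.of_smul_addConst hr)
  simp only [Quad.smul, Quad.addConst, hB, sub_zero, frobSq_smul] at hmin
  calc r ^ 2 * frobSq Q.A ≤ r ^ 2 * ((r⁻¹) ^ 2 * frobSq Q'.A) := by gcongr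
    _ = frobSq Q'.A := by field_simp

end Affine

theorem lfn_updating_model_linear_base_commutes_with_affine_general
    {n m : ℕ} (x : Fin m → (Fin n → ℝ)) (Lα : Quad n)
    (hLin : Lα.A = 0)
    (M : ((Fin n → ℝ) → ℝ) → Quad n)
    (hM : ∀ h : (Fin n → ℝ) → ℝ, (∃ Q : Quad n, Interpolates Q h x) →
      IsLFNModel Lα h x (M h) ∧ ∀ Q : Quad n, IsLFNModel Lα h x Q → Q = M h)
    (f : (Fin n → ℝ) → ℝ) (hf : ∃ Q : Quad n, Interpolates Q f x)
    (C₁ C₂ : ℝ) :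
    M (fun y => C₁ * f y + C₂) = ((M f).smul C₁).addConst C₂ := by
  obtain ⟨Qf, hQf⟩ := hf
  have hModel := (hM f ⟨Qf, hQf⟩).1
  obtain ⟨-, hUnique⟩ := hM _ ⟨_, hQf.smul_addConst C₁ C₂⟩
  exact (hUnique _ (hModel.smul_addConst hLin C₁ C₂)).symm

/-- Corollary `full`: if the base model `L_α` is linear (zero Hessian), `X` has at
least `n+1` points, and the least Frobenius norm interpolant of `L_α` on `X` is
`L_α` itself, then the least Frobenius norm updating model commutes with affine
transformations: `M(C₁f + C₂) = C₁ M(f) + C₂`. -/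
theorem lfn_updating_model_linear_base_commutes_with_affine
    {n m : ℕ} (hm : n + 1 ≤ m) (x : Fin m → (Fin n → ℝ)) (Lα : Quad n)
    (hLin : Lα.A = 0)
    (M : ((Fin n → ℝ) → ℝ) → Quad n)
    (hM : ∀ h : (Fin n → ℝ) → ℝ, (∃ Q : Quad n, Interpolates Q h x) →
      IsLFNModel Lα h x (M h) ∧ ∀ Q : Quad n, IsLFNModel Lα h x Q → Q = M h)
    (hLα : IsLFNModel Quad.zero Lα.eval x Lα ∧
      ∀ Q : Quad n, IsLFNModel Quad.zero Lα.eval x Q → Q = Lα)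
    (f : (Fin n → ℝ) → ℝ) (hf : ∃ Q : Quad n, Interpolates Q f x)
    (C₁ C₂ : ℝ) :
    M (fun y => C₁ * f y + C₂) = ((M f).smul C₁).addConst C₂ :=
  lfn_updating_model_linear_base_commutes_with_affine_general x Lα hLin M hM f hf C₁ C₂
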